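/- arXiv:2403.04118 — 2 statements merged into one kernel-verified Lean document; each statement's English description precedes it below -/
import Mathlib

section
/- The function computed by an input convex neural network is convex in its input: fix dimensions n_0, …, n_L; for each layer l let U_l be a real n_{l+1} × n_0 matrix, W_l a real n_{l+1} × n_l matrix all of whose entries are nonnegative, b_l ∈ ℝ^{n_{l+1}}, and σ_l : ℝ → ℝ convex and monotone nondecreasing. Define z_1(x) = σ_0 applied coordinatewise to (U_0 x + b_0), and recursively z_{l+1}(x) = σ_l applied coordinatewise to (U_l x + W_l z_l(x) + b_l). Then every coordinate of z_L is a convex function of x ∈ ℝ^{n_0}. -/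
lemma icnn_affine_convex {m k : ℕ} (A : Matrix (Fin m) (Fin k) ℝ) (c : ℝ) (i : Fin m) :
    ConvexOn ℝ Set.univ (fun x : Fin k → ℝ => A.mulVec x i + c) := by
  refine ⟨convex_univ, fun x _ y _ a bb ha hb hab => ?_⟩
  have : A.mulVec (a • x + bb • y) i = a * A.mulVec x i + bb * A.mulVec y i := by
    simp [Matrix.mulVec_add, Matrix.mulVec_smul]
  simp only [this, smul_eq_mul]
  have h : a * (A.mulVec x i + c) + bb * (A.mulVec y i + c)
      = a * A.mulVec x i + bb * A.mulVec y i + c := by linear_combination c * hab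
  linarith

lemma icnn_comp_convex {k : ℕ} {σ : ℝ → ℝ} {f : (Fin k → ℝ) → ℝ}
    (hσc : ConvexOn ℝ Set.univ σ) (hσm : Monotone σ)
    (hf : ConvexOn ℝ Set.univ f) :
    ConvexOn ℝ Set.univ (fun x => σ (f x)) := by
  refine ⟨convex_univ, fun x _ y _ a bb ha hb hab => ?_⟩
  calc σ (f (a • x + bb • y)) ≤ σ (a * f x + bb * f y) := by
        apply hσm
        simpa using hf.2 (Set.mem_univ x) (Set.mem_univ y) ha hb hab
    _ ≤ a * σ (f x) + bb * σ (f y) := by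
        simpa using hσc.2 (Set.mem_univ (f x)) (Set.mem_univ (f y)) ha hb hab

/-- The function computed by an input convex neural network is convex in its
input. Dimensions `n 0, …, n L`; layer `l` has input-to-layer weights `U l`
(unrestricted), hidden weights `W l` (entrywise nonnegative), bias `b l`, and a
convex nondecreasing activation `σ l` applied coordinatewise. The layers are
defined by `z 1 x = σ 0 (U 0 *ᵥ x + b 0)` and
`z (l+1) x = σ l (U l *ᵥ x + W l *ᵥ z l x + b l)` for `l ≥ 1`.
Then every coordinate of `z L` is a convex function of `x`. -/
theorem icnn_output_convex
    (n : ℕ → ℕ) (L : ℕ) (hL : 1 ≤ L)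
    (U : ∀ l : ℕ, Matrix (Fin (n (l + 1))) (Fin (n 0)) ℝ)
    (W : ∀ l : ℕ, Matrix (Fin (n (l + 1))) (Fin (n l)) ℝ)
    (hW : ∀ l : ℕ, ∀ i j, 0 ≤ W l i j)
    (b : ∀ l : ℕ, Fin (n (l + 1)) → ℝ)
    (σ : ℕ → ℝ → ℝ)
    (hσ_convex : ∀ l, ConvexOn ℝ Set.univ (σ l))
    (hσ_mono : ∀ l, Monotone (σ l))
    (z : ∀ l : ℕ, (Fin (n 0) → ℝ) → Fin (n l) → ℝ)
    (hz1 : ∀ (x : Fin (n 0) → ℝ) (i : Fin (n 1)),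
      z 1 x i = σ 0 ((U 0).mulVec x i + b 0 i))
    (hzrec : ∀ l : ℕ, 1 ≤ l → ∀ (x : Fin (n 0) → ℝ) (i : Fin (n (l + 1))),
      z (l + 1) x i = σ l ((U l).mulVec x i + (W l).mulVec (z l x) i + b l i)) :
    ∀ i : Fin (n L), ConvexOn ℝ Set.univ (fun x : Fin (n 0) → ℝ => z L x i) := by
  induction L, hL using Nat.le_induction with
  | base =>
    intro i
    have : (fun x : Fin (n 0) → ℝ => z 1 x i)
        = fun x => σ 0 ((U 0).mulVec x i + b 0 i) := funext fun x => hz1 x i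
    rw [this]
    exact icnn_comp_convex (hσ_convex 0) (hσ_mono 0) (icnn_affine_convex _ _ _)
  | succ l hl ih =>
    intro i
    have ih' := ih
    have : (fun x : Fin (n 0) → ℝ => z (l + 1) x i)
        = fun x => σ l ((U l).mulVec x i + (W l).mulVec (z l x) i + b l i) :=
      funext fun x => hzrec l hl x i
    rw [this]
    refine icnn_comp_convex (hσ_convex l) (hσ_mono l) ?_
    have hsum : ConvexOn ℝ Set.univ
        (fun x : Fin (n 0) → ℝ => ∑ j, W l i j * z l x j) := by
      have : ∀ j ∈ Finset.univ, ConvexOn ℝ Set.univ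
          (fun x : Fin (n 0) → ℝ => W l i j * z l x j) := by
        intro j _
        simpa [smul_eq_mul] using (ih' j).smul (hW l i j)
      have h := Finset.univ.sum_induction _
        (fun f : (Fin (n 0) → ℝ) → ℝ => ConvexOn ℝ Set.univ f)
        (fun f g hf hg => hf.add hg) (convexOn_const 0 convex_univ) this
      convert h using 1
      ext x
      simp
    have haff := icnn_affine_convex (U l) (b l i) i
    have := haff.add hsum
    refine this.congr ?_
    intro x _
    simp [Matrix.mulVec, dotProduct]
    ring
end

section
/- Solutions are bounded: let E be a real inner product space, v : E → ℝ differentiable and coercive (v(x) → ∞ as ‖x‖ → ∞), and f : E → E with ⟪∇v(y), f(y)⟫ ≤ 0 for all y ∈ E. Then for every differentiable curve x : ℝ → E with x'(t) = f(x(t)) for all t ≥ 0, the forward orbit {x(t) : t ≥ 0} is a bounded subset of E. -/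
open Filter

/-!
Along a solution, `t ↦ v (x t)` has derivative `⟪g (x t), f (x t)⟫ ≤ 0`, where `g = ∇v`,
so it is antitone on `[0, ∞)` and the forward orbit lies in the sublevel set `{v ≤ v (x 0)}`,
which is bounded because `v` is coercive.
-/

theorem antitoneOn_comp_of_hasDerivAt_of_apply_nonpos {F : Type*} [NormedAddCommGroup F]
    [NormedSpace ℝ F] {D : Set ℝ} (hD : Convex ℝ D) {v : F → ℝ} {v' : F → F →L[ℝ] ℝ}
    {f : F → F} {x : ℝ → F} (hv : ∀ y, HasFDerivAt v (v' y) y) (hdec : ∀ y, v' y (f y) ≤ 0)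
    (hx : ∀ t ∈ D, HasDerivAt x (f (x t)) t) : AntitoneOn (v ∘ x) D :=
  have hvx : ∀ t ∈ D, HasDerivAt (v ∘ x) (v' (x t) (f (x t))) t := fun t ht =>
    (hv (x t)).comp_hasDerivAt t (hx t ht)
  antitoneOn_of_hasDerivWithinAt_nonpos hD
    (fun t ht => (hvx t ht).continuousAt.continuousWithinAt)
    (fun t ht => (hvx t (interior_subset ht)).hasDerivWithinAt) (fun t _ => hdec (x t))

theorem Bornology.isBounded_of_bddAbove_image_of_tendsto_atTop {α : Type*} [Bornology α]
    {v : α → ℝ} (hv : Tendsto v (cobounded α) atTop) {s : Set α} (hs : BddAbove (v '' s)) :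
    IsBounded s := by
  obtain ⟨C, hC⟩ := hs
  rw [isBounded_def]
  filter_upwards [hv.eventually_gt_atTop C] with y hy hys
  exact (hC (Set.mem_image_of_mem v hys)).not_gt hy

/-- Solutions are bounded: if `v` is differentiable and coercive and
`⟪∇v(y), f(y)⟫ ≤ 0` for all `y`, then for every solution `x` of `ẋ = f(x)`
the forward orbit `{x(t) : t ≥ 0}` is bounded. The gradient `∇v` is
represented by `g : E → E` via `HasFDerivAt v (innerSL ℝ (g y)) y`. -/
theorem solution_forward_orbit_bounded
    {E : Type*} [NormedAddCommGroup E] [InnerProductSpace ℝ E]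
    (v : E → ℝ) (g : E → E)
    (hv : ∀ y : E, HasFDerivAt v (innerSL ℝ (g y)) y)
    (hcoercive : Tendsto v (Filter.comap (fun x : E => ‖x‖) atTop) atTop)
    (f : E → E)
    (hdec : ∀ y : E, (inner ℝ (g y) (f y) : ℝ) ≤ 0)
    (x : ℝ → E) (hx : ∀ t : ℝ, 0 ≤ t → HasDerivAt x (f (x t)) t) :
    Bornology.IsBounded (x '' Set.Ici (0 : ℝ)) := by
  have hanti : AntitoneOn (v ∘ x) (Set.Ici 0) :=
    antitoneOn_comp_of_hasDerivAt_of_apply_nonpos (convex_Ici 0) hv hdec hx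
  refine Bornology.isBounded_of_bddAbove_image_of_tendsto_atTop
    (comap_norm_atTop (E := E) ▸ hcoercive) ⟨v (x 0), ?_⟩
  rintro _ ⟨_, ⟨t, ht, rfl⟩, rfl⟩
  exact hanti Set.self_mem_Ici ht ht
end
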